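/- arXiv:0908.0509 — 2 statements merged into one kernel-verified Lean document; each statement's English description precedes it below -/
import Mathlib

section
/- With A1, A2, A3 the 2×2 generic multiplication matrices for O = {1, x1} ⊆ T^3 over ℤ[c], the (2,1)-entry of [A2,A3] satisfies ρ21^{23} = c21·ρ21^{13} - c22·ρ21^{12}. -/
open MvPolynomial

/-- `C2 i j` is the variable `c_{i+1, j+1}` of `ℤ[c11,…,c25]`. -/
noncomputable def C2 (i : Fin 2) (j : Fin 5) : MvPolynomial (Fin 2 × Fin 5) ℤ :=
  X (i, j)

noncomputable def A1 : Matrix (Fin 2) (Fin 2) (MvPolynomial (Fin 2 × Fin 5) ℤ) :=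
  !![0, C2 0 2; 1, C2 1 2]
noncomputable def A2 : Matrix (Fin 2) (Fin 2) (MvPolynomial (Fin 2 × Fin 5) ℤ) :=
  !![C2 0 0, C2 0 3; C2 1 0, C2 1 3]
noncomputable def A3 : Matrix (Fin 2) (Fin 2) (MvPolynomial (Fin 2 × Fin 5) ℤ) :=
  !![C2 0 1, C2 0 4; C2 1 1, C2 1 4]

/-- `ρpq^{kl}`, the `(p,q)`-entry of `[A_k, A_l]` (0-based indices). -/
noncomputable def ρ (Ak Al : Matrix (Fin 2) (Fin 2) (MvPolynomial (Fin 2 × Fin 5) ℤ))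
    (p q : Fin 2) : MvPolynomial (Fin 2 × Fin 5) ℤ :=
  (Ak * Al - Al * Ak) p q

theorem rho21_23_syzygy :
    ρ A2 A3 1 0 = C2 1 0 * ρ A1 A3 1 0 - C2 1 1 * ρ A1 A2 1 0 := by
  simp [ρ, A1, A2, A3, Matrix.mul_apply, Fin.sum_univ_two]
  ring
end

section
/- Over ℤ[c11,...,c25], with A1, A2, A3 the 2×2 generic multiplication matrices for O = {1, x1} ⊆ T^3, the ideal generated by the twelve entries ρpq^{kl} of the three commutators [A1,A2], [A1,A3], [A2,A3] equals the ideal generated by the four entries ρ11^{12}, ρ21^{12}, ρ11^{13}, ρ21^{13}. -/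
set_option maxHeartbeats 1000000

open MvPolynomial

theorem ideal_of_borderBasisScheme_O_one_x1 :
    Ideal.span ({ρ A1 A2 0 0, ρ A1 A2 0 1, ρ A1 A2 1 0, ρ A1 A2 1 1,
        ρ A1 A3 0 0, ρ A1 A3 0 1, ρ A1 A3 1 0, ρ A1 A3 1 1,
        ρ A2 A3 0 0, ρ A2 A3 0 1, ρ A2 A3 1 0, ρ A2 A3 1 1} :
        Set (MvPolynomial (Fin 2 × Fin 5) ℤ)) =
    Ideal.span {ρ A1 A2 0 0, ρ A1 A2 1 0, ρ A1 A3 0 0, ρ A1 A3 1 0} := by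
  apply le_antisymm
  · rw [Ideal.span_le]
    set I := Ideal.span ({ρ A1 A2 0 0, ρ A1 A2 1 0, ρ A1 A3 0 0, ρ A1 A3 1 0} :
        Set (MvPolynomial (Fin 2 × Fin 5) ℤ))
    have h1 : ρ A1 A2 0 0 ∈ I := Ideal.subset_span (by simp)
    have h2 : ρ A1 A2 1 0 ∈ I := Ideal.subset_span (by simp)
    have h3 : ρ A1 A3 0 0 ∈ I := Ideal.subset_span (by simp)
    have h4 : ρ A1 A3 1 0 ∈ I := Ideal.subset_span (by simp)
    intro x hx
    simp only [Set.mem_insert_iff, Set.mem_singleton_iff] at hx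
    rcases hx with rfl|rfl|rfl|rfl|rfl|rfl|rfl|rfl|rfl|rfl|rfl|rfl
    · exact h1
    · have : ρ A1 A2 0 1 = C2 1 2 * ρ A1 A2 0 0 - C2 0 2 * ρ A1 A2 1 0 := by
        simp [ρ, A1, A2, Matrix.mul_apply, Fin.sum_univ_two, Matrix.sub_apply]
        ring
      rw [this]
      exact sub_mem (Ideal.mul_mem_left _ _ h1) (Ideal.mul_mem_left _ _ h2)
    · exact h2
    · have : ρ A1 A2 1 1 = - ρ A1 A2 0 0 := by
        simp [ρ, A1, A2, Matrix.mul_apply, Fin.sum_univ_two, Matrix.sub_apply]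
        ring
      rw [this]; exact neg_mem h1
    · exact h3
    · have : ρ A1 A3 0 1 = C2 1 2 * ρ A1 A3 0 0 - C2 0 2 * ρ A1 A3 1 0 := by
        simp [ρ, A1, A3, Matrix.mul_apply, Fin.sum_univ_two, Matrix.sub_apply]
        ring
      rw [this]
      exact sub_mem (Ideal.mul_mem_left _ _ h3) (Ideal.mul_mem_left _ _ h4)
    · exact h4
    · have : ρ A1 A3 1 1 = - ρ A1 A3 0 0 := by
        simp [ρ, A1, A3, Matrix.mul_apply, Fin.sum_univ_two, Matrix.sub_apply]
        ring
      rw [this]; exact neg_mem h3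
    · have : ρ A2 A3 0 0 = C2 1 0 * ρ A1 A3 0 0 - C2 1 1 * ρ A1 A2 0 0 := by
        simp [ρ, A1, A2, A3, Matrix.mul_apply, Fin.sum_univ_two, Matrix.sub_apply]
        ring
      rw [this]
      exact sub_mem (Ideal.mul_mem_left _ _ h3) (Ideal.mul_mem_left _ _ h1)
    · have : ρ A2 A3 0 1 = C2 0 4 * ρ A1 A2 1 0 - C2 0 3 * ρ A1 A3 1 0
          - C2 1 2 * C2 1 1 * ρ A1 A2 0 0 + C2 1 2 * C2 1 0 * ρ A1 A3 0 0 := by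
        simp [ρ, A1, A2, A3, Matrix.mul_apply, Fin.sum_univ_two, Matrix.sub_apply]
        ring
      rw [this]
      exact add_mem (sub_mem (sub_mem (Ideal.mul_mem_left _ _ h2)
        (Ideal.mul_mem_left _ _ h4)) (Ideal.mul_mem_left _ _ h1))
        (Ideal.mul_mem_left _ _ h3)
    · have : ρ A2 A3 1 0 = C2 1 0 * ρ A1 A3 1 0 - C2 1 1 * ρ A1 A2 1 0 := by
        simp [ρ, A1, A2, A3, Matrix.mul_apply, Fin.sum_univ_two, Matrix.sub_apply]
        ring
      rw [this]
      exact sub_mem (Ideal.mul_mem_left _ _ h4) (Ideal.mul_mem_left _ _ h2)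
    · have : ρ A2 A3 1 1 = C2 1 1 * ρ A1 A2 0 0 - C2 1 0 * ρ A1 A3 0 0 := by
        simp [ρ, A1, A2, A3, Matrix.mul_apply, Fin.sum_univ_two, Matrix.sub_apply]
        ring
      rw [this]
      exact sub_mem (Ideal.mul_mem_left _ _ h1) (Ideal.mul_mem_left _ _ h3)
  · apply Ideal.span_mono
    intro x hx
    simp only [Set.mem_insert_iff, Set.mem_singleton_iff] at hx ⊢
    rcases hx with h|h|h|h
    · exact Or.inl h
    · exact Or.inr (Or.inr (Or.inl h))
    · exact Or.inr (Or.inr (Or.inr (Or.inr (Or.inl h))))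
    · exact Or.inr (Or.inr (Or.inr (Or.inr (Or.inr (Or.inr (Or.inl h))))))
end
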